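/- arXiv:1601.01041 — 2 statements merged into one kernel-verified Lean document; each statement's English description precedes it below -/
import Mathlib

section
/- If the complete graph K_n (n ≥ 2 finite) is a subgraph of a graph G, then the complete graph K_{⌊n²/4⌋} is a subgraph of the forest graph F(G). -/
open Cardinal

variable {V : Type*}

/-- `F` is a maximal forest of `G`: an acyclic subgraph of `G` maximal among
acyclic subgraphs of `G` under inclusion. -/
def IsMaximalForest (G F : SimpleGraph V) : Prop :=
  F ≤ G ∧ F.IsAcyclic ∧ ∀ F' : SimpleGraph V, F' ≤ G → F'.IsAcyclic → F ≤ F' → F' = F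

/-- The forest graph of `G`: vertices are the maximal forests of `G`,
two adjacent iff they differ by exactly one edge. -/
def forestGraph (G : SimpleGraph V) :
    SimpleGraph {F : SimpleGraph V // IsMaximalForest G F} where
  Adj F₁ F₂ := (F₁.1.edgeSet \ F₂.1.edgeSet).encard = 1 ∧
               (F₂.1.edgeSet \ F₁.1.edgeSet).encard = 1
  symm := ⟨fun F₁ F₂ h => ⟨h.2, h.1⟩⟩
  loopless := ⟨fun F h => by simp at h⟩

/-- The set of cycles of `G`, each cycle identified with its edge set. -/
def cycleSet (G : SimpleGraph V) : Set (Set (Sym2 V)) :=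
  {s | ∃ (v : V) (c : G.Walk v v), c.IsCycle ∧ s = {e | e ∈ c.edges}}


/-!
Split the clique into halves `A` and `B` and pick `a ∈ A`, `b ∈ B`. There is a maximal forest `F`
containing the edge `ab` in which, after deleting `ab`, `a` is still joined to all of `A` and `b`
to all of `B`: extend a spanning forest of the edges of `G` that do not cross between `A` and its
complement by `ab`. Since `ab` is a bridge of `F`, every edge `xy` with `x ∈ A`, `y ∈ B` reconnects
`F - ab` into a maximal forest `F - ab + xy`, and any two of these `|A| |B| = ⌊n²/4⌋` forests differ
in exactly one edge.
-/

open SimpleGraph Finset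

variable {G F H : SimpleGraph V} {a b x y : V}

theorem SimpleGraph.Reachable.of_forall_adj {K : SimpleGraph V}
    (h : ∀ ⦃u v⦄, H.Adj u v → K.Reachable u v) {u v : V} (huv : H.Reachable u v) :
    K.Reachable u v := by
  rw [reachable_iff_reflTransGen] at huv ⊢
  exact huv.lift' id fun u v huv => (reachable_iff_reflTransGen u v).mp (h huv)

theorem SimpleGraph.sup_edge_adj_of_ne (h : x ≠ y) : (H ⊔ edge x y).Adj x y :=
  Or.inr ((edge_adj ..).mpr ⟨Or.inl ⟨rfl, rfl⟩, h⟩)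

theorem SimpleGraph.not_reachable_of_adj_mem_iff {S : Set V}
    (hS : ∀ ⦃u v⦄, H.Adj u v → (u ∈ S ↔ v ∈ S)) (ha : a ∈ S) (hb : b ∉ S) :
    ¬H.Reachable a b := by
  rintro ⟨p⟩
  obtain ⟨d, -, hd, hd'⟩ := p.exists_boundary_dart S ha hb
  exact hd' ((hS d.adj).mp hd)

theorem isMaximalForest_iff_maximal :
    IsMaximalForest G F ↔ Maximal (fun H => H ≤ G ∧ H.IsAcyclic) F :=
  ⟨fun ⟨hFG, hF, hmax⟩ => ⟨⟨hFG, hF⟩, fun H hH hle => (hmax H hH.1 hH.2 hle).le⟩,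
    fun h => ⟨h.prop.1, h.prop.2, fun _ hHG hH hle => le_antisymm (h.le_of_ge ⟨hHG, hH⟩ hle) hle⟩⟩

theorem isMaximalForest_iff_reachable_eq (hFG : F ≤ G) (hF : F.IsAcyclic) :
    IsMaximalForest G F ↔ F.Reachable = G.Reachable := by
  rw [isMaximalForest_iff_maximal, maximal_isAcyclic_iff_reachable_eq hFG hF]

theorem IsMaximalForest.reachable_eq (hF : IsMaximalForest G F) : F.Reachable = G.Reachable :=
  (isMaximalForest_iff_reachable_eq hF.1 hF.2.1).mp hF

theorem exists_isMaximalForest_ge (hHG : H ≤ G) (hH : H.IsAcyclic) :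
    ∃ F, H ≤ F ∧ IsMaximalForest G F := by
  obtain ⟨F, hHF, hF⟩ := exists_maximal_isAcyclic_of_le_isAcyclic hHG hH
  exact ⟨F, hHF, isMaximalForest_iff_maximal.mpr hF⟩

theorem IsMaximalForest.not_reachable_deleteEdges (hF : IsMaximalForest G F) (hab : F.Adj a b) :
    ¬(F.deleteEdges {s(a, b)}).Reachable a b :=
  isBridge_iff.mp (isAcyclic_iff_forall_adj_isBridge.mp hF.2.1 hab)

theorem IsMaximalForest.deleteEdges_sup_edge (hF : IsMaximalForest G F) (hab : F.Adj a b)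
    (hx : (F.deleteEdges {s(a, b)}).Reachable a x)
    (hy : (F.deleteEdges {s(a, b)}).Reachable b y) (hxy : G.Adj x y) :
    IsMaximalForest G (F.deleteEdges {s(a, b)} ⊔ edge x y) := by
  set F' := F.deleteEdges {s(a, b)}
  have hF'xy : ¬F'.Reachable x y := fun h =>
    hF.not_reachable_deleteEdges hab (hx.trans (h.trans hy.symm))
  have hle : F' ⊔ edge x y ≤ G :=
    sup_le ((deleteEdges_le _).trans hF.1) ((edge_le_iff _).mpr (Or.inr hxy))
  rw [isMaximalForest_iff_reachable_eq hle
    ((hF.2.1.anti (deleteEdges_le _)).sup_edge_of_not_reachable hF'xy)]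
  refine le_antisymm (fun u v huv => huv.mono hle) fun u v huv => ?_
  rw [← hF.reachable_eq] at huv
  refine huv.of_forall_adj fun u v huv => ?_
  by_cases he : s(u, v) = s(a, b)
  · have hab' : (F' ⊔ edge x y).Reachable a b :=
      ((hx.mono le_sup_left).trans (sup_edge_adj_of_ne hxy.ne).reachable).trans
        (hy.mono le_sup_left).symm
    rcases Sym2.eq_iff.mp he with ⟨rfl, rfl⟩ | ⟨rfl, rfl⟩
    exacts [hab', hab'.symm]
  · exact (Adj.reachable (deleteEdges_adj.mpr ⟨huv, he⟩)).mono le_sup_left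

theorem exists_isMaximalForest_adj_reachable (hHG : H ≤ G) (hab : G.Adj a b)
    (hH : ¬H.Reachable a b) :
    ∃ F, IsMaximalForest G F ∧ F.Adj a b ∧
      ∀ ⦃u v⦄, H.Reachable u v → (F.deleteEdges {s(a, b)}).Reachable u v := by
  obtain ⟨T, -, hT⟩ := exists_isMaximalForest_ge (bot_le : ⊥ ≤ H) isAcyclic_bot
  have hTab : ¬T.Reachable a b := hT.reachable_eq ▸ hH
  obtain ⟨F, hTF, hF⟩ := exists_isMaximalForest_ge
    (sup_le (hT.1.trans hHG) ((edge_le_iff _).mpr (Or.inr hab)))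
    (hT.2.1.sup_edge_of_not_reachable hTab)
  refine ⟨F, hF, hTF (sup_edge_adj_of_ne hab.ne), fun u v huv => ?_⟩
  rw [← hT.reachable_eq] at huv
  refine huv.mono fun u v huv => deleteEdges_adj.mpr ⟨hTF (Or.inl huv), fun he => hTab ?_⟩
  rcases Sym2.eq_iff.mp (Set.mem_singleton_iff.mp he) with ⟨rfl, rfl⟩ | ⟨rfl, rfl⟩
  exacts [huv.reachable, huv.reachable.symm]

theorem forestGraph_adj_of_edgeSet_eq_insert {F₁ F₂ : {F : SimpleGraph V // IsMaximalForest G F}}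
    {S : Set (Sym2 V)} {e₁ e₂ : Sym2 V} (h₁ : F₁.1.edgeSet = insert e₁ S)
    (h₂ : F₂.1.edgeSet = insert e₂ S) (he₁ : e₁ ∉ S) (he₂ : e₂ ∉ S) (hne : e₁ ≠ e₂) :
    (forestGraph G).Adj F₁ F₂ := by
  have key : ∀ {e e' : Sym2 V}, e ∉ S → e ≠ e' → insert e S \ insert e' S = {e} := by
    intro e e' he hne
    ext f
    simp only [Set.mem_sdiff, Set.mem_insert_iff, Set.mem_singleton_iff]
    grind
  simp only [forestGraph, h₁, h₂, key he₁ hne, key he₂ hne.symm, Set.encard_singleton, and_self]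

theorem SimpleGraph.isNClique_image_of_pairwise_adj {α ι : Type*} [DecidableEq α]
    {K : SimpleGraph α} {f : ι → α} {u : Finset ι}
    (h : (u : Set ι).Pairwise fun i j => K.Adj (f i) (f j)) : K.IsNClique u.card (u.image f) := by
  refine ⟨?_, card_image_of_injOn fun i hi j hj hij => ?_⟩
  · rw [coe_image]
    rintro _ ⟨i, hi, rfl⟩ _ ⟨j, hj, rfl⟩ hij
    exact h hi hj (ne_of_apply_ne f hij)
  · by_contra hne
    exact (h hi hj hne).ne hij

theorem IsMaximalForest.exists_isNClique_forestGraph (hF : IsMaximalForest G F)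
    (hab : F.Adj a b) {A B : Finset V}
    (hA : ∀ x ∈ A, (F.deleteEdges {s(a, b)}).Reachable a x)
    (hB : ∀ y ∈ B, (F.deleteEdges {s(a, b)}).Reachable b y)
    (hAB : ∀ x ∈ A, ∀ y ∈ B, G.Adj x y) :
    ∃ t, (forestGraph G).IsNClique (A.card * B.card) t := by
  classical
  set F' := F.deleteEdges {s(a, b)}
  have hsep : ∀ x ∈ A, ∀ y ∈ B, ¬F'.Reachable x y := fun x hx y hy h =>
    hF.not_reachable_deleteEdges hab ((hA x hx).trans (h.trans (hB y hy).symm))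
  let f : A ×ˢ B → {F : SimpleGraph V // IsMaximalForest G F} := fun p =>
    ⟨F' ⊔ edge p.1.1 p.1.2, hF.deleteEdges_sup_edge hab (hA _ (mem_product.mp p.2).1)
      (hB _ (mem_product.mp p.2).2) (hAB _ (mem_product.mp p.2).1 _ (mem_product.mp p.2).2)⟩
  have hedges : ∀ p, (f p).1.edgeSet = insert s(p.1.1, p.1.2) F'.edgeSet := fun p => by
    have hp := mem_product.mp p.2
    rw [edgeSet_sup, edgeSet_edge_of_ne (hAB _ hp.1 _ hp.2).ne, Set.union_singleton]
  have hnotin : ∀ p : A ×ˢ B, s(p.1.1, p.1.2) ∉ F'.edgeSet := fun p h => by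
    have hp := mem_product.mp p.2
    exact hsep _ hp.1 _ hp.2 (Adj.reachable h)
  refine ⟨univ.image f, ?_⟩
  rw [← card_product, ← Fintype.card_coe, ← card_univ]
  refine isNClique_image_of_pairwise_adj fun p _ q _ hpq =>
    forestGraph_adj_of_edgeSet_eq_insert (hedges p) (hedges q) (hnotin p) (hnotin q) fun he => ?_
  have hp := mem_product.mp p.2
  have hq := mem_product.mp q.2
  rcases Sym2.eq_iff.mp he with ⟨h₁, h₂⟩ | ⟨h₁, -⟩
  · exact hpq (Subtype.ext (Prod.ext h₁ h₂))
  · exact hsep _ hp.1 _ hq.2 (h₁ ▸ Reachable.refl _)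

theorem Nat.sq_div_four (n : ℕ) : n ^ 2 / 4 = n / 2 * (n - n / 2) := by
  obtain ⟨m, rfl | rfl⟩ := n.even_or_odd'
  · rw [show (2 * m) ^ 2 = m * m * 4 by ring, show 2 * m / 2 = m by omega,
      show 2 * m - m = m by omega]
    omega
  · rw [show (2 * m + 1) ^ 2 = m * (m + 1) * 4 + 1 by ring, show (2 * m + 1) / 2 = m by omega,
      show 2 * m + 1 - m = m + 1 by omega]
    omega

/-- If `K_n` (finite `n ≥ 2`) is a subgraph of `G`, then `K_{⌊n²/4⌋}` is a
subgraph of the forest graph of `G`. -/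
theorem clique_forestGraph (G : SimpleGraph V) (n : ℕ) (hn : 2 ≤ n)
    (s : Finset V) (hs : G.IsNClique n s) :
    ∃ t : Finset {F : SimpleGraph V // IsMaximalForest G F},
      (forestGraph G).IsNClique (n ^ 2 / 4) t := by
  classical
  obtain ⟨A, hAs, hA⟩ := exists_subset_card_eq (show n / 2 ≤ s.card by rw [hs.card_eq]; omega)
  have hB : (s \ A).card = n - n / 2 := by rw [card_sdiff_of_subset hAs, hs.card_eq, hA]
  obtain ⟨a, ha⟩ : A.Nonempty := card_pos.mp (by omega)
  obtain ⟨b, hb⟩ : (s \ A).Nonempty := card_pos.mp (by omega)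
  obtain ⟨hbs, hbA⟩ := mem_sdiff.mp hb
  set H := G ⊓ fromRel fun u v => (u ∈ A ↔ v ∈ A)
  have hH : ∀ u ∈ s, ∀ v ∈ s, (u ∈ A ↔ v ∈ A) → H.Reachable u v := fun u hu v hv huv => by
    rcases eq_or_ne u v with rfl | hne
    exacts [Reachable.refl _, Adj.reachable ⟨hs.1 hu hv hne, hne, Or.inl huv⟩]
  obtain ⟨F, hF, hFab, hHF⟩ := exists_isMaximalForest_adj_reachable (inf_le_left : H ≤ G)
    (hs.1 (hAs ha) hbs fun h => hbA (h ▸ ha))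
    (not_reachable_of_adj_mem_iff (S := A) (fun u v huv => huv.2.2.elim id Iff.symm) ha hbA)
  obtain ⟨t, ht⟩ := hF.exists_isNClique_forestGraph hFab (A := A) (B := s \ A)
    (fun x hx => hHF (hH a (hAs ha) x (hAs hx) (iff_of_true ha hx)))
    (fun y hy => hHF (hH b hbs y (mem_sdiff.mp hy).1 (iff_of_false hbA (mem_sdiff.mp hy).2)))
    fun x hx y hy => hs.1 (hAs hx) (mem_sdiff.mp hy).1 fun h => (mem_sdiff.mp hy).2 (h ▸ hx)
  rw [hA, hB, ← Nat.sq_div_four] at ht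
  exact ⟨t, ht⟩
end

section
/- If a graph G has β cycles where β is an infinite cardinal, then the forest graph F(G) is β-regular: every vertex of F(G) has degree β. -/
open Cardinal

variable {V : Type*}

universe u

/-!
Fix a maximal forest `F` of `G` and let `D` be the set of edges of `G` not in `F`. For `e ∈ D`,
the edges of `F` whose deletion disconnects the ends of `e` are exactly the edges of the
`F`-path joining them; together with `e` they form the fundamental cycle of `e`, a finite set.

Every `e ∈ D` lies on a cycle, and every cycle is covered by the fundamental cycles of its
edges in `D`. Cycles and fundamental cycles being finite, `#D = β`. The neighbours of `F` in
`F(G)` are the forests `F - f + e` with `e ∈ D` and `f` on the fundamental cycle of `e`; each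
`e` has at least one and only finitely many such `f`, so `F` has between `#D` and `#D * ℵ₀ = β`
neighbours.
-/

namespace Cardinal

theorem mk_biUnion_le_mul_aleph0 {ι α : Type u} {A : ι → Set α} {s : Set ι}
    (hA : ∀ i ∈ s, (A i).Finite) : #(⋃ i ∈ s, A i) ≤ #s * ℵ₀ :=
  (mk_biUnion_le A s).trans <| by gcongr; exact ciSup_le' fun i ↦ (hA i i.2).lt_aleph0.le

theorem mk_le_of_forall_finite_subset_biUnion {ι α : Type u} {A : ι → Set α} {s : Set ι}
    (hA : ∀ i ∈ s, (A i).Finite) {𝒞 : Set (Set α)}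
    (h𝒞 : ∀ c ∈ 𝒞, c.Finite ∧ c ⊆ ⋃ i ∈ s, A i) (hinf : ℵ₀ ≤ #𝒞) : #𝒞 ≤ #s := by
  set U := ⋃ i ∈ s, A i
  have hsub : 𝒞 ⊆ Set.range fun t : Finset U ↦ (↑) '' (t : Set U) := fun c hc ↦
    ⟨((h𝒞 c hc).1.preimage Subtype.val_injective.injOn).toFinset, by
      simpa using Set.image_preimage_eq_of_subset (f := ((↑) : U → α))
        (by simpa using (h𝒞 c hc).2)⟩
  have hle : #𝒞 ≤ #(Finset U) := (mk_le_mk_of_subset hsub).trans mk_range_le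
  have hU : U.Infinite := fun hU ↦ by
    have := hU.to_subtype
    exact (hinf.trans hle).not_gt (lt_aleph0_of_finite _)
  have hs : s.Infinite := fun hs ↦ hU (hs.biUnion hA)
  have := hU.to_subtype
  calc #𝒞 ≤ #U := hle.trans_eq (mk_finset_of_infinite U)
    _ ≤ #s * ℵ₀ := mk_biUnion_le_mul_aleph0 hA
    _ = #s := mul_aleph0_eq (infinite_iff.1 hs.to_subtype)

end Cardinal

namespace SimpleGraph

variable {G F H : SimpleGraph V} {u v a b : V} {f : Sym2 V}

theorem reachable_sup_edge_iff :
    (H ⊔ edge a b).Reachable u v ↔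
      H.Reachable u v ∨ H.Reachable u a ∧ H.Reachable b v ∨ H.Reachable u b ∧ H.Reachable a v := by
  have hab : (H ⊔ edge a b).Reachable a b := by
    rcases eq_or_ne a b with rfl | hne
    · rfl
    · exact Adj.reachable (.inr ((edge_adj ..).2 ⟨.inl ⟨rfl, rfl⟩, hne⟩))
  constructor
  · rintro ⟨p⟩
    induction p with
    | nil => exact .inl .rfl
    | @cons x y _ hxy _ ih =>
      rcases hxy with hxy | hxy
      · have := hxy.reachable
        grind [Reachable.trans]
      · obtain ⟨⟨rfl, rfl⟩ | ⟨rfl, rfl⟩, -⟩ := (edge_adj ..).1 hxy <;>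
          grind [Reachable.trans, Reachable.symm, Reachable.refl]
  · have hH : H ≤ H ⊔ edge a b := le_sup_left
    rintro (h | ⟨hua, hbv⟩ | ⟨hub, hav⟩)
    · exact h.mono hH
    · exact (hua.mono hH).trans (hab.trans (hbv.mono hH))
    · exact (hub.mono hH).trans (hab.symm.trans (hav.mono hH))

def Separates (F : SimpleGraph V) (f e : Sym2 V) : Prop :=
  Sym2.lift ⟨fun u v ↦ ¬(F.deleteEdges {f}).Reachable u v, fun _ _ ↦ by simp [reachable_comm]⟩ e

theorem Separates.mem_edges (h : F.Separates f s(u, v)) (p : F.Walk u v) : f ∈ p.edges :=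
  by_contra fun hf ↦ h ⟨p.toDeleteEdge f hf⟩

theorem Separates.mem_edgeSet (h : F.Separates f s(u, v)) (huv : F.Reachable u v) :
    f ∈ F.edgeSet :=
  let ⟨p⟩ := huv
  p.edges_subset_edgeSet (h.mem_edges p)

theorem Reachable.finite_setOf_separates (huv : F.Reachable u v) :
    {f | F.Separates f s(u, v)}.Finite :=
  let ⟨p⟩ := huv
  p.edges.finite_toSet.subset fun _ hf ↦ Separates.mem_edges hf p

theorem IsAcyclic.separates_of_mem_edges (hF : F.IsAcyclic) {p : F.Walk u v} (hp : p.IsPath)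
    (hf : f ∈ p.edges) : F.Separates f s(u, v) := by
  classical
  induction f using Sym2.ind with | _ a b
  rintro hr
  obtain ⟨q, hq⟩ := reachable_deleteEdges_iff_exists_walk.1 hr
  have : q.bypass = p :=
    congrArg Subtype.val <| (hF.subsingleton_path u v).elim ⟨_, q.bypass_isPath⟩ ⟨p, hp⟩
  exact hq (q.edges_bypass_subset_edges (this ▸ hf))

theorem IsAcyclic.exists_separates (hF : F.IsAcyclic) (huv : F.Reachable u v) (hne : u ≠ v) :
    ∃ f, F.Separates f s(u, v) := by
  classical
  obtain ⟨p⟩ := huv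
  obtain ⟨f, hf⟩ := List.exists_mem_of_ne_nil _ <|
    mt Walk.edges_eq_nil.1 (p.bypass.not_nil_of_ne hne)
  exact ⟨f, hF.separates_of_mem_edges p.bypass_isPath hf⟩

theorem IsAcyclic.exists_separates_of_mem_edges_isCycle (hF : F.IsAcyclic) {c : G.Walk v v}
    (hc : c.IsCycle) (hfc : f ∈ c.edges) (hfF : f ∈ F.edgeSet) :
    ∃ e ∈ c.edges, e ∉ F.edgeSet ∧ F.Separates f e := by
  induction f using Sym2.ind with | _ a b
  set C : SimpleGraph V := fromEdgeSet {x | x ∈ c.edges}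
  have hcC : ∀ x ∈ c.edges, x ∈ C.edgeSet := fun x hx ↦ by
    rw [edgeSet_fromEdgeSet]
    exact ⟨hx, G.not_isDiag_of_mem_edgeSet (c.edges_subset_edgeSet hx)⟩
  obtain ⟨-, ⟨q⟩⟩ := adj_and_reachable_delete_edges_iff_exists_cycle.2
    ⟨v, c.transfer C hcC, hc.transfer hcC, by rwa [Walk.edges_transfer]⟩
  set K := F.deleteEdges {s(a, b)}
  obtain ⟨d, -, had, hbd⟩ := q.exists_boundary_dart {x | K.Reachable a x} .rfl
    (isAcyclic_iff_forall_adj_isBridge.1 hF hfF)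
  have hd : s(d.fst, d.snd) ∈ c.edges ∧ s(d.fst, d.snd) ≠ s(a, b) := by
    simpa [C, deleteEdges_adj, fromEdgeSet_adj] using d.adj
  have hsep : F.Separates s(a, b) s(d.fst, d.snd) := fun h ↦ hbd (had.trans h)
  refine ⟨_, hd.1, fun hdF ↦ hsep ?_, hsep⟩
  exact Adj.reachable ((deleteEdges_adj ..).2 ⟨hdF, hd.2⟩)

end SimpleGraph

open SimpleGraph

variable {G F N : SimpleGraph V} {u v : V} {e f : Sym2 V}

theorem IsMaximalForest.le (hF : IsMaximalForest G F) : F ≤ G := hF.1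

theorem IsMaximalForest.isAcyclic (hF : IsMaximalForest G F) : F.IsAcyclic := hF.2.1

theorem isMaximalForest_iff :
    IsMaximalForest G F ↔ F ≤ G ∧ F.IsAcyclic ∧ F.Reachable = G.Reachable := by
  refine ⟨fun ⟨hle, hF, hmax⟩ ↦ ⟨hle, hF, ?_⟩, fun ⟨hle, hF, hr⟩ ↦ ⟨hle, hF, ?_⟩⟩
  · exact (maximal_isAcyclic_iff_reachable_eq hle hF).1
      ⟨⟨hle, hF⟩, fun F' hF' hFF' ↦ (hmax F' hF'.1 hF'.2 hFF').le⟩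
  · exact fun F' hF'G hF' hFF' ↦
      le_antisymm ((maximal_isAcyclic_iff_reachable_eq hle hF).2 hr |>.2 ⟨hF'G, hF'⟩ hFF') hFF'

theorem IsMaximalForest.reachable (hF : IsMaximalForest G F) (huv : G.Adj u v) :
    F.Reachable u v :=
  (isMaximalForest_iff.1 hF).2.2 ▸ huv.reachable

theorem IsMaximalForest.finite_setOf_separates (hF : IsMaximalForest G F) (he : e ∈ G.edgeSet) :
    {f | F.Separates f e}.Finite := by
  induction e using Sym2.ind with | _ u v
  exact (hF.reachable he).finite_setOf_separates

theorem IsMaximalForest.exchange (hF : IsMaximalForest G F) (huv : G.Adj u v)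
    (hf : F.Separates f s(u, v)) : IsMaximalForest G (F.deleteEdges {f} ⊔ edge u v) := by
  obtain ⟨hFG, hFac, hFr⟩ := isMaximalForest_iff.1 hF
  set H := F.deleteEdges {f}
  have hNG : H ⊔ edge u v ≤ G :=
    sup_le ((deleteEdges_le _).trans hFG) ((edge_le_iff _).2 (.inr huv))
  refine isMaximalForest_iff.2 ⟨hNG, (hFac.anti (deleteEdges_le _)).sup_edge_of_not_reachable hf,
    le_antisymm (fun x y h ↦ h.mono hNG) ?_⟩
  induction f using Sym2.ind with | _ a b
  have hFle : F ≤ H ⊔ edge a b := le_sdiff_sup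
  have hab : (H ⊔ edge u v).Reachable a b := by
    rcases reachable_sup_edge_iff.1 ((hF.reachable huv).mono hFle) with
      h | ⟨hua, hbv⟩ | ⟨hub, hav⟩
    · exact absurd h hf
    · exact reachable_sup_edge_iff.2 (.inr (.inl ⟨hua.symm, hbv.symm⟩))
    · exact reachable_sup_edge_iff.2 (.inr (.inr ⟨hav, hub⟩))
  rw [← hFr]
  intro x y hxy
  rcases reachable_sup_edge_iff.1 (hxy.mono (hFle.trans (sup_le_sup_right le_sup_left _))) with
    h | ⟨hxa, hby⟩ | ⟨hxb, hay⟩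
  · exact h
  · exact hxa.trans (hab.trans hby)
  · exact hxb.trans (hab.symm.trans hay)

theorem IsMaximalForest.separates_of_diff_eq_singleton (hN : IsMaximalForest G N)
    (hNF : N.edgeSet \ F.edgeSet = {e}) (hFN : F.edgeSet \ N.edgeSet = {f}) :
    F.Separates f e := by
  induction e using Sym2.ind with | _ u v
  have he : s(u, v) ∈ N.edgeSet \ F.edgeSet := hNF ▸ rfl
  have hle : F.deleteEdges {f} ≤ N.deleteEdges {s(u, v)} := by
    rw [← edgeSet_subset_edgeSet, edgeSet_deleteEdges, edgeSet_deleteEdges]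
    intro x ⟨hxF, hxf⟩
    refine ⟨by_contra fun hxN ↦ hxf (hFN ▸ ⟨hxF, hxN⟩), ?_⟩
    rintro rfl
    exact he.2 hxF
  exact fun h ↦ isAcyclic_iff_forall_adj_isBridge.1 hN.isAcyclic he.1 (h.mono hle)

theorem IsMaximalForest.exists_isCycle_mem_edges (hF : IsMaximalForest G F)
    (he : e ∈ G.edgeSet \ F.edgeSet) : ∃ (v : V) (c : G.Walk v v), c.IsCycle ∧ e ∈ c.edges := by
  induction e using Sym2.ind with | _ u v
  refine adj_and_reachable_delete_edges_iff_exists_cycle.1 ⟨he.1, (hF.reachable he.1).mono ?_⟩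
  rw [← edgeSet_subset_edgeSet, edgeSet_deleteEdges]
  exact fun x hx ↦ ⟨edgeSet_subset_edgeSet.2 hF.le hx, by rintro rfl; exact he.2 hx⟩

theorem forestGraph_adj_iff {F N : {F : SimpleGraph V // IsMaximalForest G F}} :
    (forestGraph G).Adj F N ↔ ∃ e ∈ G.edgeSet \ F.1.edgeSet, ∃ f, F.1.Separates f e ∧
      N.1.edgeSet \ F.1.edgeSet = {e} ∧ F.1.edgeSet \ N.1.edgeSet = {f} := by
  constructor
  · rintro ⟨hFN, hNF⟩
    obtain ⟨e, hNF⟩ := Set.encard_eq_one.1 hNF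
    obtain ⟨f, hFN⟩ := Set.encard_eq_one.1 hFN
    have he : e ∈ N.1.edgeSet \ F.1.edgeSet := hNF ▸ rfl
    exact ⟨e, ⟨edgeSet_subset_edgeSet.2 N.2.le he.1, he.2⟩, f,
      N.2.separates_of_diff_eq_singleton hNF hFN, hNF, hFN⟩
  · rintro ⟨e, -, f, -, hNF, hFN⟩
    exact ⟨by simp [hFN], by simp [hNF]⟩

theorem exists_forestGraph_adj (F : {F : SimpleGraph V // IsMaximalForest G F})
    (he : e ∈ G.edgeSet \ F.1.edgeSet) :
    ∃ N, (forestGraph G).Adj F N ∧ N.1.edgeSet \ F.1.edgeSet = {e} := by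
  induction e using Sym2.ind with | _ u v
  obtain ⟨huv, heF⟩ := he
  have hr := F.2.reachable huv
  obtain ⟨f, hf⟩ := F.2.isAcyclic.exists_separates hr huv.ne
  have hfF := hf.mem_edgeSet hr
  have hN : (F.1.deleteEdges {f} ⊔ edge u v).edgeSet = insert s(u, v) (F.1.edgeSet \ {f}) := by
    rw [edgeSet_sup, edgeSet_deleteEdges, edgeSet_edge_of_ne huv.ne, Set.union_comm]; rfl
  have hNF : (F.1.deleteEdges {f} ⊔ edge u v).edgeSet \ F.1.edgeSet = {s(u, v)} := by
    rw [hN]; grind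
  have hFN : F.1.edgeSet \ (F.1.deleteEdges {f} ⊔ edge u v).edgeSet = {f} := by
    rw [hN]; grind
  exact ⟨⟨_, F.2.exchange huv hf⟩, forestGraph_adj_iff.2 ⟨_, ⟨huv, heF⟩, f, hf, hNF, hFN⟩, hNF⟩

theorem IsMaximalForest.mk_edgeSet_diff_eq (hF : IsMaximalForest G F)
    (hinf : ℵ₀ ≤ #(cycleSet G)) : #(G.edgeSet \ F.edgeSet : Set (Sym2 V)) = #(cycleSet G) := by
  apply le_antisymm
  · calc #(G.edgeSet \ F.edgeSet : Set (Sym2 V))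
        ≤ #(⋃ c ∈ cycleSet G, c) := mk_le_mk_of_subset fun e he ↦ ?_
      _ ≤ #(cycleSet G) * ℵ₀ :=
          mk_biUnion_le_mul_aleph0 fun _ ⟨_, c, _, hc⟩ ↦ hc ▸ c.edges.finite_toSet
      _ = #(cycleSet G) := mul_aleph0_eq hinf
    obtain ⟨v, c, hc, hec⟩ := hF.exists_isCycle_mem_edges he
    exact Set.mem_biUnion ⟨v, c, hc, rfl⟩ hec
  · refine mk_le_of_forall_finite_subset_biUnion (A := fun e ↦ insert e {f | F.Separates f e})
      (fun e he ↦ (hF.finite_setOf_separates he.1).insert e) ?_ hinf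
    rintro _ ⟨v, c, hc, rfl⟩
    refine ⟨c.edges.finite_toSet, fun x hx ↦ ?_⟩
    by_cases hxF : x ∈ F.edgeSet
    · obtain ⟨e, hec, heF, hsep⟩ := hF.isAcyclic.exists_separates_of_mem_edges_isCycle hc hx hxF
      exact Set.mem_biUnion ⟨c.edges_subset_edgeSet hec, heF⟩ (Set.mem_insert_of_mem _ hsep)
    · exact Set.mem_biUnion ⟨c.edges_subset_edgeSet hx, hxF⟩ (Set.mem_insert x _)

theorem mk_neighborSet_forestGraph (F : {F : SimpleGraph V // IsMaximalForest G F})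
    (hF : ℵ₀ ≤ #(G.edgeSet \ F.1.edgeSet : Set (Sym2 V))) :
    #((forestGraph G).neighborSet F) = #(G.edgeSet \ F.1.edgeSet : Set (Sym2 V)) := by
  set D := G.edgeSet \ F.1.edgeSet
  set exchanged : (forestGraph G).neighborSet F → Set (Sym2 V) × Set (Sym2 V) :=
    fun N ↦ (N.1.1.edgeSet \ F.1.edgeSet, F.1.edgeSet \ N.1.1.edgeSet)
  have hexchanged : Function.Injective exchanged := by
    have key (N : SimpleGraph V) :
        N.edgeSet = F.1.edgeSet \ (F.1.edgeSet \ N.edgeSet) ∪ (N.edgeSet \ F.1.edgeSet) := by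
      rw [Set.sdiff_sdiff_right_self, Set.inter_comm, Set.inter_union_sdiff]
    intro N N' h
    obtain ⟨h₁, h₂⟩ := Prod.mk.inj h
    exact Subtype.ext <| Subtype.ext <| edgeSet_injective <| by
      rw [key N.1.1, key N'.1.1, h₁, h₂]
  apply le_antisymm
  · calc #((forestGraph G).neighborSet F)
        = #(Set.range exchanged) := (mk_range_eq _ hexchanged).symm
      _ ≤ #(⋃ e ∈ D, (fun f ↦ (({e} : Set (Sym2 V)), ({f} : Set (Sym2 V)))) ''
            {f | F.1.Separates f e}) := mk_le_mk_of_subset ?_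
      _ ≤ #D * ℵ₀ := mk_biUnion_le_mul_aleph0 fun e he ↦ (F.2.finite_setOf_separates he.1).image _
      _ = #D := mul_aleph0_eq hF
    rintro _ ⟨N, rfl⟩
    obtain ⟨e, he, f, hf, hNF, hFN⟩ := forestGraph_adj_iff.1 N.2
    exact Set.mem_biUnion he ⟨f, hf, by simp [exchanged, hNF, hFN]⟩
  · calc #D = #((fun e ↦ ({e} : Set (Sym2 V))) '' D) := (mk_image_eq Set.singleton_injective).symm
      _ ≤ #(Set.range fun N : (forestGraph G).neighborSet F ↦ N.1.1.edgeSet \ F.1.edgeSet) :=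
          mk_le_mk_of_subset ?_
      _ ≤ #((forestGraph G).neighborSet F) := mk_range_le
    rintro _ ⟨e, he, rfl⟩
    obtain ⟨N, hadj, hN⟩ := exists_forestGraph_adj F he
    exact ⟨⟨N, hadj⟩, hN⟩

/-- If `G` has `β` cycles, `β` infinite, then the forest graph of `G` is `β`-regular. -/
theorem forestGraph_regular {W : Type u} (G : SimpleGraph W) (β : Cardinal.{u}) (hβ : ℵ₀ ≤ β)
    (hc : #(cycleSet G) = β) :
    ∀ F : {F : SimpleGraph W // IsMaximalForest G F},
      #((forestGraph G).neighborSet F) = β := by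
  intro F
  subst hc
  have hD := F.2.mk_edgeSet_diff_eq hβ
  rw [mk_neighborSet_forestGraph F (hD ▸ hβ), hD]
end
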